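/- arXiv:1810.00677 — 2 statements merged into one kernel-verified Lean document; each statement's English description precedes it below -/
import Mathlib

section
/- Let ν be a Lévy measure on ℝ^d∖{0} satisfying A(w,l) with scaling function w and scaling factor l, and let ς(r):=ν({y:|y|>r}) for r>0. Then there exist constants C₁,C₂>0 such that C₁ ς(r) ≤ w(r)^{−1} ≤ C₂ ς(r) for all r>0. -/
open MeasureTheory Real Set Filter
open scoped ENNReal RealInnerProductSpace Topology Classical

noncomputable section

/-- Euclidean space `ℝ^d`. -/
abbrev Rd (d : ℕ) := EuclideanSpace ℝ (Fin d)

variable {d : ℕ}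

/-- sup norm `|u|_0`. -/
def nrm0 {E : Type*} [NormedAddCommGroup E] (u : Rd d → E) : ℝ := ⨆ x, ‖u x‖

/-- generalized Hölder seminorm `[u]_β` w.r.t. the scaling function `w`. -/
def semiH {E : Type*} [NormedAddCommGroup E] (w : ℝ → ℝ) (β : ℝ) (u : Rd d → E) : ℝ :=
  ⨆ pr : Rd d × {h : Rd d // h ≠ 0}, ‖u (pr.1 + pr.2.1) - u pr.1‖ / (w ‖pr.2.1‖) ^ β

/-- generalized Hölder norm `|u|_β = |u|_0 + [u]_β`. -/
def hNorm {E : Type*} [NormedAddCommGroup E] (w : ℝ → ℝ) (β : ℝ) (u : Rd d → E) : ℝ :=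
  nrm0 u + semiH w β u

/-- membership in the generalized Hölder class `C̃^β(ℝ^d)`. -/
def MemH {E : Type*} [NormedAddCommGroup E] (w : ℝ → ℝ) (β : ℝ) (u : Rd d → E) : Prop :=
  BddAbove (range fun x => ‖u x‖) ∧
  BddAbove (range fun pr : Rd d × {h : Rd d // h ≠ 0} =>
    ‖u (pr.1 + pr.2.1) - u pr.1‖ / (w ‖pr.2.1‖) ^ β)

/-- the cutoff function `χ_α`. -/
def chiA (α : ℝ) (y : Rd d) : ℝ :=
  if 1 < α then 1 else if α = 1 then (if ‖y‖ ≤ 1 then 1 else 0) else 0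

/-- the operator `L^μ`. -/
def Lop (μ : Measure (Rd d)) (α : ℝ) (u : Rd d → ℝ) (x : Rd d) : ℝ :=
  ∫ y, (u (x + y) - u x - chiA α y * fderiv ℝ u x y) ∂μ

/-- `|u|_{1+β} = |u|_0 + |L^μ u|_0 + [L^μ u]_β`. -/
def hNorm1 (w : ℝ → ℝ) (β : ℝ) (μ : Measure (Rd d)) (α : ℝ) (u : Rd d → ℝ) : ℝ :=
  nrm0 u + nrm0 (Lop μ α u) + semiH w β (Lop μ α u)

/-- membership in `C̃^{1+β}(ℝ^d)`. -/
def MemH1 (w : ℝ → ℝ) (β : ℝ) (μ : Measure (Rd d)) (α : ℝ) (u : Rd d → ℝ) : Prop :=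
  BddAbove (range fun x => |u x|) ∧ MemH w β (Lop μ α u)

/-- parabolic sup norm over `H_T = [0,T]×ℝ^d`. -/
def nrm0T (T : ℝ) (u : ℝ → Rd d → ℝ) : ℝ :=
  ⨆ pr : Icc (0:ℝ) T × Rd d, |u pr.1.val pr.2|

/-- parabolic Hölder seminorm over `H_T`. -/
def semiHT (w : ℝ → ℝ) (β T : ℝ) (u : ℝ → Rd d → ℝ) : ℝ :=
  ⨆ pr : Icc (0:ℝ) T × Rd d × {h : Rd d // h ≠ 0},
    |u pr.1.val (pr.2.1 + pr.2.2.val) - u pr.1.val pr.2.1| / (w ‖pr.2.2.val‖) ^ β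

/-- parabolic Hölder norm `|u|_β` on `H_T`. -/
def hNormT (w : ℝ → ℝ) (β T : ℝ) (u : ℝ → Rd d → ℝ) : ℝ := nrm0T T u + semiHT w β T u

/-- membership in `C̃^β(H_T)`. -/
def MemHT (w : ℝ → ℝ) (β T : ℝ) (u : ℝ → Rd d → ℝ) : Prop :=
  BddAbove (range fun pr : Icc (0:ℝ) T × Rd d => |u pr.1.val pr.2|) ∧
  BddAbove (range fun pr : Icc (0:ℝ) T × Rd d × {h : Rd d // h ≠ 0} =>
    |u pr.1.val (pr.2.1 + pr.2.2.val) - u pr.1.val pr.2.1| / (w ‖pr.2.2.val‖) ^ β)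

/-- `L^μ` acting on time dependent functions. -/
def LopT (μ : Measure (Rd d)) (α : ℝ) (u : ℝ → Rd d → ℝ) : ℝ → Rd d → ℝ :=
  fun t => Lop μ α (u t)

/-- parabolic norm `|u|_{1+β}` on `H_T`. -/
def hNorm1T (w : ℝ → ℝ) (β T : ℝ) (μ : Measure (Rd d)) (α : ℝ) (u : ℝ → Rd d → ℝ) : ℝ :=
  nrm0T T u + nrm0T T (LopT μ α u) + semiHT w β T (LopT μ α u)

/-- membership in `C̃^{1+β}(H_T)`. -/
def MemH1T (w : ℝ → ℝ) (β T : ℝ) (μ : Measure (Rd d)) (α : ℝ) (u : ℝ → Rd d → ℝ) : Prop :=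
  BddAbove (range fun pr : Icc (0:ℝ) T × Rd d => |u pr.1.val pr.2|) ∧
  MemHT w β T (LopT μ α u)

/-- `|v|_{κ+β} := |v|_0 + |L^μ v|_0 + [L^μ v]_{κ+β-1}` (case `κ+β>1`). -/
def hNormK (w : ℝ → ℝ) (κ β : ℝ) (μ : Measure (Rd d)) (α : ℝ) (v : Rd d → ℝ) : ℝ :=
  nrm0 v + nrm0 (Lop μ α v) + semiH w (κ + β - 1) (Lop μ α v)

/-- `|v|_{κ+β}`, piecewise according to `κ+β<1` or `κ+β>1`. -/
def hNormKB (w : ℝ → ℝ) (κ β : ℝ) (μ : Measure (Rd d)) (α : ℝ) (v : Rd d → ℝ) : ℝ :=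
  if κ + β < 1 then nrm0 v + semiH w (κ + β) v
  else nrm0 v + nrm0 (Lop μ α v) + semiH w (κ + β - 1) (Lop μ α v)

/-- a Lévy measure on `ℝ^d∖{0}`. -/
def IsLevy (ν : Measure (Rd d)) : Prop :=
  ν {0} = 0 ∧ ∫⁻ y, ENNReal.ofReal (min (‖y‖ ^ 2) 1) ∂ν < ⊤

/-- `ν` has order `α`. -/
def HasOrder (ν : Measure (Rd d)) (α : ℝ) : Prop :=
  α = sInf {σ : ℝ | σ ∈ Ioo (0:ℝ) 2 ∧
    (∫⁻ y in {y : Rd d | ‖y‖ ≤ 1}, ENNReal.ofReal (‖y‖ ^ σ) ∂ν) < ⊤}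

/-- the rescaled measure `ν_R`. -/
def nuScaled (ν : Measure (Rd d)) (R : ℝ) : Measure (Rd d) :=
  Measure.map (fun y => R⁻¹ • y) ν

/-- the measure `ν̃_R = w(R) ν_R`. -/
def nuTilde (w : ℝ → ℝ) (ν : Measure (Rd d)) (R : ℝ) : Measure (Rd d) :=
  ENNReal.ofReal (w R) • nuScaled ν R

/-- `w` is a scaling function with scaling factor `l`, normalized by `w(1)=1`. -/
structure ScalingPair (w l : ℝ → ℝ) : Prop where
  w_pos : ∀ r > 0, 0 < w r
  w_cont : ContinuousOn w (Ioi 0)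
  w_zero : Tendsto w (𝓝[>] 0) (𝓝 0)
  w_top : Tendsto w atTop atTop
  w_one : w 1 = 1
  l_pos : ∀ r > 0, 0 < l r
  l_mono : MonotoneOn l (Ioi 0)
  l_cont : ContinuousOn l (Ioi 0)
  l_zero : Tendsto l (𝓝[>] 0) (𝓝 0)
  scale : ∀ ε > 0, ∀ r > 0, w (ε * r) ≤ l ε * w r

/-- the function `υ` of assumption A(w,l)(i). -/
def upsilonA (α : ℝ) (μ0 : Measure (Rd d)) (ξ : Rd d) : ℝ :=
  ∫ y, chiA α y * ‖y‖ * min (‖ξ‖ * ‖y‖) 1 ∂μ0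

/-- the function `ζ⁰` of assumption A(w,l)(i). -/
def zeta0 (μ0 : Measure (Rd d)) (ξ : Rd d) : ℝ :=
  ∫ y, (1 - Real.cos (2 * π * (inner ℝ ξ y : ℝ))) ∂μ0

/-- Assumption **A(w,l)** of the paper on a Lévy measure `ν` of order `α`. -/
structure AssumpA (w l : ℝ → ℝ) (α : ℝ) (ν : Measure (Rd d)) : Prop where
  levy : IsLevy ν
  order : HasOrder ν α
  scaling : ScalingPair w l
  nondeg : ∃ μ0 : Measure (Rd d), IsLevy μ0 ∧ μ0 {y : Rd d | 1 < ‖y‖} = 0 ∧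
    (∀ R > 0, μ0 ≤ nuTilde w ν R) ∧
    ((∫⁻ y, ENNReal.ofReal (‖y‖ ^ 2) ∂μ0) +
      (∫⁻ ξ, ENNReal.ofReal (‖ξ‖ ^ 4 * (1 + upsilonA α μ0 ξ) ^ (d + 3) *
        Real.exp (-(zeta0 μ0 ξ)))) < ⊤) ∧
    ∃ c0 > 0, ∀ ξ : Rd d, ‖ξ‖ = 1 →
      c0 ≤ ∫ y in {y : Rd d | ‖y‖ ≤ 1}, (inner ℝ ξ y : ℝ) ^ 2 ∂μ0
  symm : α = 1 → ∀ r R : ℝ, 0 < r → r < R →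
    (∫ y in {y : Rd d | r < ‖y‖ ∧ ‖y‖ < R}, y ∂ν) = 0
  scalable : ∃ α₁ α₂ : ℝ, α₂ ≤ α₁ ∧
    (α < 1 → α₁ ∈ Ioo (0:ℝ) 1 ∧ α₂ ∈ Ioo (0:ℝ) 1) ∧
    (1 < α → α₁ ∈ Ioc (1:ℝ) 2 ∧ α₂ ∈ Ioc (1:ℝ) 2) ∧
    (α = 1 → α₁ ∈ Ioc (1:ℝ) 2 ∧ α₂ ∈ Ico (0:ℝ) 1) ∧
    ∃ N₀ > 0, ∀ R > 0,
      (∫⁻ y in {y : Rd d | ‖y‖ ≤ 1}, ENNReal.ofReal (‖y‖ ^ α₁) ∂(nuTilde w ν R)) +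
      (∫⁻ y in {y : Rd d | 1 < ‖y‖}, ENNReal.ofReal (‖y‖ ^ α₂) ∂(nuTilde w ν R)) ≤
        ENNReal.ofReal N₀
  tailCont : ContinuousOn (fun r : ℝ => (ν {y : Rd d | r < ‖y‖}).toReal) (Ioi 0)
  tailScale : ∃ C₀ > 0, ∀ r > 0,
    (∫ s in Ioo (0:ℝ) 1,
      s * (ν {y : Rd d | r * s < ‖y‖}).toReal / (ν {y : Rd d | r < ‖y‖}).toReal) ≤ C₀

/-- `γ(t) = inf{s>0 : l(s) ≥ t}`. -/
def gammaFn (l : ℝ → ℝ) (t : ℝ) : ℝ := sInf {s : ℝ | 0 < s ∧ t ≤ l s}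

/-- Assumption **Ã(w,l,γ)** of the paper, with the constants `ε, δ, δ'` explicit. -/
structure AssumpATilde (w l : ℝ → ℝ) (α β ε δ δ' : ℝ) (ν : Measure (Rd d)) : Prop where
  base : AssumpA w l α ν
  eps_mem : ε ∈ Ioo (0:ℝ) 1
  int_l : ∀ β' ∈ Ioo (0:ℝ) (β + ε),
    (∫⁻ t in Ioo (0:ℝ) 1, ENNReal.ofReal (l t ^ β' / t)) +
    (∫⁻ t in Ioi (1:ℝ), ENNReal.ofReal (l t ^ β' / t ^ 2)) +
    (if 1 ≤ α then ∫⁻ t in Ioo (0:ℝ) 1, ENNReal.ofReal (l t ^ (1 + β') / t ^ 2) else 0) < ⊤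
  delta_mem : δ ∈ Ioo 0 (min (1/2) β)
  delta'_mem : δ' ∈ Ioo 0 (min (1/2) ε)
  gamma_low : α < 1 →
    (∫⁻ t in Ioi (1:ℝ), ENNReal.ofReal (t ^ δ / gammaFn l t)) < ⊤
  gamma_one : α = 1 →
    (∫⁻ t in Ioo (0:ℝ) 1, ENNReal.ofReal (t ^ δ / gammaFn l t)) +
    (∫⁻ t in Ioi (1:ℝ), ENNReal.ofReal (t ^ (-δ') / gammaFn l t + t ^ δ / (gammaFn l t) ^ 2)) < ⊤
  gamma_high : 1 < α →
    (∫⁻ t in Ioo (0:ℝ) 1, ENNReal.ofReal (t ^ (-δ) / gammaFn l t)) +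
    (∫⁻ t in Ioi (1:ℝ),
      ENNReal.ofReal (t ^ δ / (gammaFn l t) ^ 2 + t ^ (-(1:ℝ)/2 + δ) / gammaFn l t)) < ⊤

/-- Assumption **H(K,β)** on the kernel `ρ`. -/
def AssumpH (w : ℝ → ℝ) (α β K T : ℝ) (ν : Measure (Rd d))
    (ρ : ℝ → Rd d → Rd d → ℝ) : Prop :=
  (∀ t ∈ Icc (0:ℝ) T, ∀ x y : Rd d, |ρ t x y| ≤ K) ∧
  (∀ t ∈ Icc (0:ℝ) T, ∀ x₁ x₂ y : Rd d, |ρ t x₁ y - ρ t x₂ y| ≤ K * (w ‖x₁ - x₂‖) ^ β) ∧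
  (α = 1 → ∀ t ∈ Icc (0:ℝ) T, ∀ x : Rd d, ∀ r ∈ Ioo (0:ℝ) 1,
    (∫ y in {y : Rd d | r < ‖y‖ ∧ ‖y‖ < 1}, ρ t x y • y ∂ν) = 0)

/-- Assumption **B(K,β)** on the lower order coefficients. -/
structure AssumpB (w : ℝ → ℝ) (α β K T : ℝ) (ν₂ : Measure (Rd d))
    (b : ℝ → Rd d → Rd d) (p : ℝ → Rd d → ℝ)
    (ϱ : ℝ → Rd d → Rd d → ℝ) (q : ℝ → Rd d → Rd d → Rd d) : Prop where
  holder_coeffs : ∀ t ∈ Icc (0:ℝ) T, ∀ y : Rd d,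
    MemH w β (b t) ∧ MemH w β (p t) ∧ MemH w β (fun z => ϱ t z y) ∧
    hNorm w β (b t) + hNorm w β (p t) + hNorm w β (fun z => ϱ t z y) ≤ K
  q_ne : ∀ t ∈ Icc (0:ℝ) T, ∀ z' y : Rd d, y ≠ 0 → q t z' y ≠ 0
  q_small : Tendsto (fun ε : ℝ => ⨆ pr : Icc (0:ℝ) T × Rd d,
      ∫ y in {y : Rd d | ‖q pr.1.val pr.2 y‖ ≤ ε},
        (w ‖q pr.1.val pr.2 y‖ + (if α = 1 then ‖q pr.1.val pr.2 y‖ else 0)) ∂ν₂)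
    (𝓝[>] 0) (𝓝 0)
  q_int_low : α ≤ 1 → ∀ t ∈ Icc (0:ℝ) T, ∀ z' : Rd d,
    (∫ y, ((if α < 1 then min (w ‖q t z' y‖) 1 else 0) +
          (if α = 1 then min ‖q t z' y‖ 1 else 0)) ∂ν₂) ≤ K
  q_int_high : 1 < α → ∀ t ∈ Icc (0:ℝ) T, ∀ z' : Rd d,
    (∫ y in {y : Rd d | ‖y‖ ≤ 1}, w ‖q t z' y‖ ∂ν₂) +
    (∫ y in {y : Rd d | 1 < ‖y‖}, min ‖q t z' y‖ 1 ∂ν₂) ≤ K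
  q_holder_high : 1 < α → ∀ t ∈ Icc (0:ℝ) T, ∀ x h : Rd d,
    ((∫ y in {y : Rd d | ‖y‖ ≤ 1},
        (w ‖q t (x + h) y‖) ^ β * ‖q t (x + h) y - q t x y‖ ∂ν₂) ≤ K * (w ‖h‖) ^ β) ∧
    ((∫ y in {y : Rd d | ‖y‖ ≤ 1},
        (w ‖q t (x + h) y - q t x y‖) ^ β * ‖q t x y‖ ∂ν₂) ≤ K * (w ‖h‖) ^ β) ∧
    ((∫ y in {y : Rd d | 1 < ‖y‖}, min ‖q t (x + h) y - q t x y‖ 1 ∂ν₂) ≤ K * (w ‖h‖) ^ β)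
  q_holder_low : α < 1 → ∀ t ∈ Icc (0:ℝ) T, ∀ z' h : Rd d,
    (∫ y, min (w ‖q t (z' + h) y - q t z' y‖) 1 ∂ν₂) ≤ K * (w ‖h‖) ^ β
  q_holder_one : α = 1 → ∀ t ∈ Icc (0:ℝ) T, ∀ z' h : Rd d,
    (∫ y, min ‖q t (z' + h) y - q t z' y‖ 1 ∂ν₂) ≤ K * (w ‖h‖) ^ β

/-- the compensated increment `∇^α u(x;y)`. -/
def nablaA (α : ℝ) (u : Rd d → ℝ) (x y : Rd d) : ℝ :=
  u (x + y) - u x - chiA α y * fderiv ℝ u x y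

/-- the operator `𝒜` with space dependent kernel. -/
def Aop (ν : Measure (Rd d)) (α : ℝ) (ρ : ℝ → Rd d → Rd d → ℝ)
    (u : ℝ → Rd d → ℝ) (t : ℝ) (x : Rd d) : ℝ :=
  ∫ y, nablaA α (u t) x y * ρ t x y ∂ν

/-- the frozen operator `L_{t,z}`. -/
def Ltz (ν : Measure (Rd d)) (α : ℝ) (ρ : ℝ → Rd d → Rd d → ℝ)
    (t : ℝ) (z : Rd d) (u : Rd d → ℝ) (x : Rd d) : ℝ :=
  ∫ y, nablaA α u x y * ρ t z y ∂ν

/-- the operator `𝒢` with space dependent coefficient `G`. -/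
def Gop (ν : Measure (Rd d)) (α : ℝ) (G : Rd d → Rd d →L[ℝ] Rd d)
    (u : Rd d → ℝ) (x : Rd d) : ℝ :=
  ∫ y, (u (x + G x y) - u x - chiA α y * fderiv ℝ u x (G x y)) ∂ν

/-- the frozen operator `L_z` (coefficient case). -/
def LzG (ν : Measure (Rd d)) (α : ℝ) (G : Rd d → Rd d →L[ℝ] Rd d)
    (z : Rd d) (u : Rd d → ℝ) (x : Rd d) : ℝ :=
  ∫ y, (u (x + G z y) - u x - chiA α y * fderiv ℝ u x (G z y)) ∂ν

/-- the lower order operator `Q`. -/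
def Qop (ν₂ : Measure (Rd d)) (α : ℝ) (b : ℝ → Rd d → Rd d) (p : ℝ → Rd d → ℝ)
    (ϱ : ℝ → Rd d → Rd d → ℝ) (q : ℝ → Rd d → Rd d → Rd d)
    (u : ℝ → Rd d → ℝ) (t : ℝ) (x : Rd d) : ℝ :=
  (if 1 < α then fderiv ℝ (u t) x (b t x) else 0) + p t x * u t x +
  ∫ y, ((u t (x + q t x y) - u t x -
      (if 1 < α ∧ ‖y‖ ≤ 1 then fderiv ℝ (u t) x (q t x y) else 0)) * ϱ t x y) ∂ν₂

/-- the operator `Q̃_{t,z,z'}`. -/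
def Qtilde (ν₂ : Measure (Rd d)) (α : ℝ) (ϱ : ℝ → Rd d → Rd d → ℝ)
    (q : ℝ → Rd d → Rd d → Rd d) (t : ℝ) (z z' : Rd d)
    (u : ℝ → Rd d → ℝ) (x : Rd d) : ℝ :=
  ∫ y, ((u t (x + q t z' y) - u t x -
      (if 1 < α ∧ ‖y‖ ≤ 1 then fderiv ℝ (u t) x (q t z' y) else 0)) * ϱ t z y) ∂ν₂

/-- `u` solves the Cauchy problem `∂_t u = ℒu - λu + f`, `u(0,·)=0`, on `H_T`,
in the integral sense; `Lu` is the function `(t,x) ↦ ℒu(t,x)`. -/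
def SolvesCauchy (T lam : ℝ) (Lu : ℝ → Rd d → ℝ) (f u : ℝ → Rd d → ℝ) : Prop :=
  ∀ t ∈ Icc (0:ℝ) T, ∀ x : Rd d,
    u t x = ∫ s in (0:ℝ)..t, (Lu s x - lam * u s x + f s x)

/-- `λ⁻¹ ∧ T` (with the convention `0⁻¹ = ∞`). -/
def lamT (lam T : ℝ) : ℝ := if lam = 0 then T else min lam⁻¹ T

/-- `η` is an admissible cutoff function. -/
def IsCutoff (η : Rd d → ℝ) : Prop :=
  ContDiff ℝ (⊤ : ℕ∞) η ∧ HasCompactSupport η ∧ (∀ x, 0 ≤ η x ∧ η x ≤ 1) ∧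
  (∀ x : Rd d, ‖x‖ ≤ 1 → η x = 1) ∧ (∀ x : Rd d, 2 < ‖x‖ → η x = 0)

/-- `η_{m,z}(x) = η(m(x-z))`. -/
def etaCut (η : Rd d → ℝ) (m : ℝ) (z x : Rd d) : ℝ := η (m • (x - z))

/-- `Ḡ_{z,z'} = ‖G(z)-G(z')‖`. -/
def opDist (G : Rd d → Rd d →L[ℝ] Rd d) (z z' : Rd d) : ℝ := ‖G z - G z'‖

/-- the modulus `g(z,z')` of assumption G(c₀,K,β). -/
def gFun (w : ℝ → ℝ) (α δ' : ℝ) (G : Rd d → Rd d →L[ℝ] Rd d) (z z' : Rd d) : ℝ :=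
  if α < 1 then (w (opDist G z z')⁻¹)⁻¹
  else if α = 1 then
    max ((w (opDist G z z')⁻¹)⁻¹ * (w (opDist G z z')) ^ (-δ')) (opDist G z z')
  else opDist G z z'

/-- Assumption **G(c₀,K,β)** on the coefficient `G`. -/
structure AssumpG (w : ℝ → ℝ) (α β δ' c₀ K : ℝ) (G : Rd d → Rd d →L[ℝ] Rd d) : Prop where
  invertible : ∀ z, ∃ Gi : Rd d →L[ℝ] Rd d,
    (G z).comp Gi = ContinuousLinearMap.id ℝ (Rd d) ∧
    Gi.comp (G z) = ContinuousLinearMap.id ℝ (Rd d)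
  unifCont : UniformContinuous G
  inj : Function.Injective G
  detLB : ∀ z, c₀ ≤ |LinearMap.det ((G z).toLinearMap)|
  normUB : ∀ z, ‖G z‖ ≤ K
  gHolder : ∀ z z', z ≠ z' → gFun w α δ' G z z' ≤ K * (w ‖z - z'‖) ^ β

/-- `f ∈ C_b²(ℝ^d)`. -/
def CB2 (f : Rd d → ℝ) : Prop :=
  ContDiff ℝ 2 f ∧ ∀ i : ℕ, i ≤ 2 → BddAbove (range fun x => ‖iteratedFDeriv ℝ i f x‖)

end

/-!
The upper bound `w(r) ς(r) ≤ N₀` is the tail part of assumption A(w,l)(iii) at scale `R = r`,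
since `w(r) ς(r) = ν̃_r(|y| > 1)`. For the lower bound, `∫ (ξ·y)² dμ⁰ ≥ c₀ > 0` shows that
`μ⁰` charges `{y ≠ 0}`, hence `μ⁰(|y| > ε) > 0` for some `ε > 0`; then `μ⁰ ≤ ν̃_{r/ε}` gives `w(r/ε) ς(r) ≥ μ⁰(|y| > ε)`,
and `w(r/ε) ≤ l(1/ε) w(r)`.
-/

section NormedSpace

variable {E : Type*} [NormedAddCommGroup E] [MeasurableSpace E] {μ : Measure E}

theorem measure_compl_zero_ne_zero_of_setIntegral_pos {f : E → ℝ} (hf : f 0 = 0) {s : Set E}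
    (h : 0 < ∫ y in s, f y ∂μ) : μ {0}ᶜ ≠ 0 := by
  intro h0
  have hf0 : f =ᵐ[μ.restrict s] 0 := by
    refine ae_restrict_of_ae ?_
    filter_upwards [ae_iff.2 h0] with y hy
    simp only [Set.mem_singleton_iff] at hy
    simp [hy, hf]
  rw [integral_eq_zero_of_ae hf0] at h
  exact lt_irrefl 0 h

theorem exists_measure_lt_norm_ne_zero (h : μ {0}ᶜ ≠ 0) :
    ∃ ε > 0, μ {y | ε < ‖y‖} ≠ 0 := by
  by_contra! H
  refine h (measure_mono_null (fun y hy => ?_)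
    (measure_iUnion_null fun n : ℕ => H (1 / (n + 1)) Nat.one_div_pos_of_nat))
  obtain ⟨n, hn⟩ := exists_nat_one_div_lt (norm_pos_iff.2 hy)
  exact Set.mem_iUnion.2 ⟨n, hn⟩

theorem measure_one_lt_norm_le_setLIntegral_rpow [OpensMeasurableSpace E] {p : ℝ} (hp : 0 ≤ p) :
    μ {y | 1 < ‖y‖} ≤ ∫⁻ y in {y | 1 < ‖y‖}, ENNReal.ofReal (‖y‖ ^ p) ∂μ := by
  rw [← setLIntegral_one]
  exact setLIntegral_mono' (isOpen_lt continuous_const continuous_norm).measurableSet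
    fun y hy => ENNReal.one_le_ofReal.2 (Real.one_le_rpow (le_of_lt hy) hp)

end NormedSpace

section Tail

variable {d : ℕ} {w l : ℝ → ℝ} {α : ℝ} {ν : Measure (Rd d)}

theorem nuTilde_apply_lt_norm {R : ℝ} (hR : 0 < R) (ρ : ℝ) :
    nuTilde w ν R {y | ρ < ‖y‖} = ENNReal.ofReal (w R) * ν {y | ρ * R < ‖y‖} := by
  rw [nuTilde, Measure.smul_apply, smul_eq_mul, nuScaled,
    Measure.map_apply (continuous_const_smul R⁻¹).measurable
      (isOpen_lt continuous_const continuous_norm).measurableSet]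
  congr 2
  ext y
  simp only [Set.mem_preimage, Set.mem_ofPred_eq, norm_smul, Real.norm_eq_abs,
    abs_of_pos (inv_pos.2 hR), inv_mul_eq_div, lt_div_iff₀ hR]

namespace AssumpA

theorem exists_ofReal_mul_tail_le (hA : AssumpA w l α ν) :
    ∃ N > 0, ∀ r > 0, ENNReal.ofReal (w r) * ν {y | r < ‖y‖} ≤ ENNReal.ofReal N := by
  obtain ⟨α₁, α₂, -, hlt, hgt, heq, N₀, hN₀, hsc⟩ := hA.scalable
  have hα₂ : 0 ≤ α₂ := by
    rcases lt_trichotomy α 1 with h | h | h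
    · exact (hlt h).2.1.le
    · exact (heq h).2.1
    · linarith [(hgt h).2.1]
  refine ⟨N₀, hN₀, fun r hr => ?_⟩
  calc ENNReal.ofReal (w r) * ν {y | r < ‖y‖} = nuTilde w ν r {y | 1 < ‖y‖} := by
        rw [nuTilde_apply_lt_norm hr, one_mul]
    _ ≤ ∫⁻ y in {y | 1 < ‖y‖}, ENNReal.ofReal (‖y‖ ^ α₂) ∂(nuTilde w ν r) :=
        measure_one_lt_norm_le_setLIntegral_rpow hα₂
    _ ≤ ENNReal.ofReal N₀ := le_add_self.trans (hsc r hr)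

theorem tail_ne_top (hA : AssumpA w l α ν) {r : ℝ} (hr : 0 < r) : ν {y | r < ‖y‖} ≠ ⊤ := by
  obtain ⟨N, -, hN⟩ := hA.exists_ofReal_mul_tail_le
  have hw : ENNReal.ofReal (w r) ≠ 0 := by simpa using hA.scaling.w_pos r hr
  intro htop
  have h := (hN r hr).trans_lt ENNReal.ofReal_lt_top
  rw [htop, ENNReal.mul_top hw] at h
  exact lt_irrefl _ h

theorem exists_mul_tail_toReal_le (hA : AssumpA w l α ν) :
    ∃ N > 0, ∀ r > 0, w r * (ν {y | r < ‖y‖}).toReal ≤ N := by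
  obtain ⟨N, hN, hle⟩ := hA.exists_ofReal_mul_tail_le
  refine ⟨N, hN, fun r hr => ?_⟩
  have h := ENNReal.toReal_le_of_le_ofReal hN.le (hle r hr)
  rwa [ENNReal.toReal_mul, ENNReal.toReal_ofReal (hA.scaling.w_pos r hr).le] at h

theorem exists_le_mul_tail_toReal (hA : AssumpA w l α ν) (hd : 1 ≤ d) :
    ∃ c > 0, ∀ r > 0, c ≤ w r * (ν {y | r < ‖y‖}).toReal := by
  obtain ⟨μ0, -, -, hμle, -, c0, hc0, hc0ξ⟩ := hA.nondeg
  have : Nonempty (Fin d) := ⟨⟨0, hd⟩⟩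
  obtain ⟨ξ, hξ⟩ := exists_norm_eq (Rd d) zero_le_one
  obtain ⟨ε, hε, hμε⟩ := exists_measure_lt_norm_ne_zero
    (measure_compl_zero_ne_zero_of_setIntegral_pos (f := fun y => (inner ℝ ξ y : ℝ) ^ 2)
      (by simp) (hc0.trans_le (hc0ξ ξ hξ)))
  obtain ⟨m, -, hm_pos, hmμ⟩ := ENNReal.lt_iff_exists_real_btwn.1 (pos_iff_ne_zero.2 hμε)
  have hm : 0 < m := ENNReal.ofReal_pos.1 hm_pos
  have hl : 0 < l ε⁻¹ := hA.scaling.l_pos _ (inv_pos.2 hε)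
  refine ⟨m / l ε⁻¹, div_pos hm hl, fun r hr => ?_⟩
  have hR : 0 < ε⁻¹ * r := by positivity
  have hwR : 0 < w (ε⁻¹ * r) := hA.scaling.w_pos _ hR
  have hmass : ENNReal.ofReal m ≤ ENNReal.ofReal (w (ε⁻¹ * r)) * ν {y | r < ‖y‖} :=
    calc ENNReal.ofReal m ≤ μ0 {y | ε < ‖y‖} := hmμ.le
      _ ≤ nuTilde w ν (ε⁻¹ * r) {y | ε < ‖y‖} := Measure.le_iff'.1 (hμle _ hR) _
      _ = _ := by rw [nuTilde_apply_lt_norm hR, mul_inv_cancel_left₀ hε.ne']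
  rw [ENNReal.ofReal_le_iff_le_toReal (ENNReal.mul_ne_top ENNReal.ofReal_ne_top (hA.tail_ne_top hr)),
    ENNReal.toReal_mul, ENNReal.toReal_ofReal hwR.le] at hmass
  rw [div_le_iff₀' hl]
  calc m ≤ w (ε⁻¹ * r) * (ν {y | r < ‖y‖}).toReal := hmass
    _ ≤ l ε⁻¹ * w r * (ν {y | r < ‖y‖}).toReal := by
      gcongr
      exact hA.scaling.scale _ (inv_pos.2 hε) r hr
    _ = _ := by ring

end AssumpA

end Tail

/-- Lemma ess (a): the tail `ς(r)=ν(|y|>r)` is comparable to `w(r)⁻¹`. -/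
theorem tail_comparable_scaling (d : ℕ) (hd : 1 ≤ d) (w l : ℝ → ℝ) (α : ℝ)
    (ν : Measure (Rd d)) (hA : AssumpA w l α ν) :
    ∃ C₁ > 0, ∃ C₂ > 0, ∀ r > 0,
      C₁ * (ν {y : Rd d | r < ‖y‖}).toReal ≤ (w r)⁻¹ ∧
      (w r)⁻¹ ≤ C₂ * (ν {y : Rd d | r < ‖y‖}).toReal := by
  obtain ⟨N, hN, hupper⟩ := hA.exists_mul_tail_toReal_le
  obtain ⟨c, hc, hlower⟩ := hA.exists_le_mul_tail_toReal hd
  refine ⟨N⁻¹, inv_pos.2 hN, c⁻¹, inv_pos.2 hc, fun r hr => ?_⟩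
  have hw := hA.scaling.w_pos r hr
  constructor
  · rw [inv_mul_le_iff₀ hN, ← div_eq_mul_inv, le_div_iff₀ hw, mul_comm]
    exact hupper r hr
  · rw [le_inv_mul_iff₀ hc, ← div_eq_mul_inv, div_le_iff₀ hw, mul_comm]
    exact hlower r hr
end

section
/- Let ν be a Lévy measure on ℝ^d∖{0} satisfying A(w,l) with scaling function w and scaling factor l. Then: (b) ∫_{|y|≤1} w(|y|) ν(dy) = +∞; (c) for every ε>0, ∫_{|y|≤1} w(|y|)^{1+ε} ν(dy) < ∞; and (d) for every ε>0, ∫_{|y|≤1} |y|^ε w(|y|) ν(dy) < ∞. -/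
open MeasureTheory Real Set Filter
open scoped ENNReal RealInnerProductSpace Topology Classical

/-! Cut the punctured unit ball into the shells `e^(k+1) < |y| ≤ e^k`, with `e < 1` so small
that `l(e) < 1`. Assumption (iii) at the scale `R = e^k` bounds the mass of the `k`-th shell by a
multiple of `1 / w(e^k)`, while on that shell `w(|y|) ≤ l(1) w(e^k)` and `w(e^k) ≤ l(e)^k`. Hence
`w^(1+ε)` and `|y|^ε w` have geometrically decaying shell integrals.

For (b), pulling `μ⁰ ≤ ν̃_R` back through the dilation gives
`μ⁰(δ ≤ |z| ≤ 1) ≤ l(1/δ) ∫_{|y| ≤ R} w(|y|) dν` for every `R > 0`, with a left side that is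
positive by nondegeneracy; a finite integral over the unit ball would instead tend to `0` as
`R → 0`, since `ν` does not charge the origin. -/

namespace ScalingPair

variable {w l : ℝ → ℝ}

theorem exists_factor_lt_one (hwl : ScalingPair w l) : ∃ e, 0 < e ∧ e < 1 ∧ l e < 1 := by
  obtain ⟨e, hle, he0, he1⟩ := ((hwl.l_zero.eventually (gt_mem_nhds one_pos)).and
    (Ioo_mem_nhdsGT one_pos)).exists
  exact ⟨e, he0, he1, hle⟩

theorem apply_le_mul_apply (hwl : ScalingPair w l) {r s c : ℝ} (hr : 0 < r) (hs : 0 < s)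
    (hc : 0 < c) (hsr : s ≤ c * r) : w s ≤ l c * w r := by
  calc w s = w (s / r * r) := by rw [div_mul_cancel₀ s hr.ne']
    _ ≤ l (s / r) * w r := hwl.scale _ (div_pos hs hr) r hr
    _ ≤ l c * w r := by
      gcongr
      · exact (hwl.w_pos r hr).le
      · exact hwl.l_mono (div_pos hs hr) hc ((div_le_iff₀ hr).2 hsr)

theorem apply_pow_le (hwl : ScalingPair w l) {e : ℝ} (he : 0 < e) (k : ℕ) :
    w (e ^ k) ≤ l e ^ k := by
  induction k with
  | zero => simp [hwl.w_one]
  | succ k ih =>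
    calc w (e ^ (k + 1)) = w (e * e ^ k) := by rw [pow_succ']
      _ ≤ l e * w (e ^ k) := hwl.scale e he _ (pow_pos he k)
      _ ≤ l e * l e ^ k := by gcongr; exact (hwl.l_pos e he).le
      _ = l e ^ (k + 1) := (pow_succ' _ _).symm

end ScalingPair

section PuncturedBall

variable {E : Type*} [NormedAddCommGroup E] [MeasurableSpace E] {ν : Measure E}

theorem setLIntegral_norm_le_one_le_tsum_shells (hν0 : ν {0} = 0) {e : ℝ} (he0 : 0 < e)
    (he1 : e < 1) (f : E → ℝ≥0∞) :
    ∫⁻ y in {y | ‖y‖ ≤ 1}, f y ∂ν ≤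
      ∑' k : ℕ, ∫⁻ y in norm ⁻¹' Ioc (e ^ (k + 1)) (e ^ k), f y ∂ν := by
  have hcover : {y : E | ‖y‖ ≤ 1} ⊆ {0} ∪ ⋃ k : ℕ, norm ⁻¹' Ioc (e ^ (k + 1)) (e ^ k) := by
    intro y hy
    rcases eq_or_ne y 0 with rfl | hy0
    · exact Or.inl rfl
    · obtain ⟨k, hk⟩ := exists_nat_pow_near_of_lt_one (norm_pos_iff.2 hy0) hy he0 he1
      exact Or.inr (mem_iUnion.2 ⟨k, hk⟩)
  calc ∫⁻ y in {y | ‖y‖ ≤ 1}, f y ∂ν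
      ≤ ∫⁻ y in {0} ∪ ⋃ k : ℕ, norm ⁻¹' Ioc (e ^ (k + 1)) (e ^ k), f y ∂ν :=
        lintegral_mono_set hcover
    _ ≤ ∫⁻ y in {0}, f y ∂ν + ∫⁻ y in ⋃ k : ℕ, norm ⁻¹' Ioc (e ^ (k + 1)) (e ^ k), f y ∂ν :=
        lintegral_union_le _ _ _
    _ ≤ ∑' k : ℕ, ∫⁻ y in norm ⁻¹' Ioc (e ^ (k + 1)) (e ^ k), f y ∂ν := by
        rw [Measure.restrict_eq_zero.2 hν0, lintegral_zero_measure, zero_add]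
        exact lintegral_iUnion_le _ _

theorem setLIntegral_norm_le_one_lt_top_of_shells [OpensMeasurableSpace E] (hν0 : ν {0} = 0)
    {e : ℝ} (he0 : 0 < e) (he1 : e < 1) {f : E → ℝ≥0∞} {v : ℕ → ℝ} (hv : ∀ k, 0 ≤ v k)
    {C : ℝ≥0∞} (hC : C ≠ ⊤) {M q : ℝ} (hq0 : 0 ≤ q) (hq1 : q < 1)
    (hν : ∀ k, ENNReal.ofReal (v k) * ν (norm ⁻¹' Ioc (e ^ (k + 1)) (e ^ k)) ≤ C)
    (hf : ∀ k, ∀ y ∈ norm ⁻¹' Ioc (e ^ (k + 1)) (e ^ k), f y ≤ ENNReal.ofReal (M * q ^ k * v k)) :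
    ∫⁻ y in {y | ‖y‖ ≤ 1}, f y ∂ν < ⊤ := by
  have hshell : ∀ k, ∫⁻ y in norm ⁻¹' Ioc (e ^ (k + 1)) (e ^ k), f y ∂ν ≤
      ENNReal.ofReal M * ENNReal.ofReal q ^ k * C := by
    intro k
    calc ∫⁻ y in norm ⁻¹' Ioc (e ^ (k + 1)) (e ^ k), f y ∂ν
        ≤ ∫⁻ _ in norm ⁻¹' Ioc (e ^ (k + 1)) (e ^ k), ENNReal.ofReal (M * q ^ k * v k) ∂ν :=
          setLIntegral_mono' (measurable_norm measurableSet_Ioc) (hf k)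
      _ = ENNReal.ofReal M * ENNReal.ofReal q ^ k *
            (ENNReal.ofReal (v k) * ν (norm ⁻¹' Ioc (e ^ (k + 1)) (e ^ k))) := by
          rw [setLIntegral_const, ENNReal.ofReal_mul' (hv k),
            ENNReal.ofReal_mul' (pow_nonneg hq0 k), ENNReal.ofReal_pow hq0, mul_assoc]
      _ ≤ ENNReal.ofReal M * ENNReal.ofReal q ^ k * C := by gcongr; exact hν k
  calc ∫⁻ y in {y | ‖y‖ ≤ 1}, f y ∂ν
      ≤ ∑' k : ℕ, ∫⁻ y in norm ⁻¹' Ioc (e ^ (k + 1)) (e ^ k), f y ∂ν :=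
        setLIntegral_norm_le_one_le_tsum_shells hν0 he0 he1 f
    _ ≤ ∑' k : ℕ, ENNReal.ofReal M * ENNReal.ofReal q ^ k * C := ENNReal.tsum_le_tsum hshell
    _ = ENNReal.ofReal M * (1 - ENNReal.ofReal q)⁻¹ * C := by
        rw [ENNReal.tsum_mul_right, ENNReal.tsum_mul_left, ENNReal.tsum_geometric]
    _ < ⊤ := ENNReal.mul_lt_top (ENNReal.mul_lt_top ENNReal.ofReal_lt_top
        (ENNReal.inv_lt_top.2 (tsub_pos_of_lt (ENNReal.ofReal_lt_one.2 hq1)))) hC.lt_top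

theorem tendsto_setLIntegral_norm_le_nhdsGT_zero [OpensMeasurableSpace E] (hν0 : ν {0} = 0)
    {f : E → ℝ≥0∞} (hf : ∫⁻ y in {y | ‖y‖ ≤ 1}, f y ∂ν ≠ ⊤) :
    Tendsto (fun r : ℝ => ∫⁻ y in {y | ‖y‖ ≤ r}, f y ∂ν) (𝓝[>] 0) (𝓝 0) := by
  have hmeas : ∀ r : ℝ, MeasurableSet {y : E | ‖y‖ ≤ r} :=
    fun r => measurableSet_le measurable_norm measurable_const
  have hinter : (⋂ r > (0 : ℝ), {y : E | ‖y‖ ≤ r}) = {0} := by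
    ext y
    simp only [mem_iInter, mem_ofPred_eq, mem_singleton_iff]
    refine ⟨fun h => norm_le_zero_iff.1 (le_of_forall_pos_le_add fun ε hε => ?_), ?_⟩
    · simpa using h ε hε
    · rintro rfl r hr
      simpa using hr.le
  have key := tendsto_measure_biInter_gt (μ := ν.withDensity f)
    (fun r _ => (hmeas r).nullMeasurableSet)
    (fun i j _ hij y (hy : ‖y‖ ≤ i) => hy.trans hij)
    ⟨1, one_pos, by rwa [withDensity_apply f (hmeas 1)]⟩
  rw [hinter, withDensity_apply f (measurableSet_singleton 0),
    Measure.restrict_eq_zero.2 hν0, lintegral_zero_measure] at key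
  exact key.congr fun r => withDensity_apply f (hmeas r)

theorem exists_measure_norm_mem_Icc_ne_zero {μ : Measure E} (hμ0 : μ {0} = 0)
    (hμ : μ {y | ‖y‖ ≤ 1} ≠ 0) : ∃ δ > 0, μ (norm ⁻¹' Icc δ 1) ≠ 0 := by
  by_contra! h
  refine hμ (measure_mono_null (t := {0} ∪ ⋃ n : ℕ, norm ⁻¹' Icc (1 / (n + 1 : ℝ)) 1) ?_
    (measure_union_null hμ0 (measure_iUnion_null fun n => h _ (by positivity))))
  intro y hy
  rcases eq_or_ne y 0 with rfl | hy0
  · exact Or.inl rfl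
  · obtain ⟨n, hn⟩ := exists_nat_one_div_lt (norm_pos_iff.2 hy0)
    exact Or.inr (mem_iUnion.2 ⟨n, hn.le, hy⟩)

end PuncturedBall

section LevyScaling

variable {d : ℕ} {w l : ℝ → ℝ} {α : ℝ} {ν : Measure (Rd d)}

theorem nuTilde_norm_preimage {R : ℝ} (hR : 0 < R)
    {S : Set ℝ} (hS : MeasurableSet S) :
    nuTilde w ν R (norm ⁻¹' S) = ENNReal.ofReal (w R) * ν (norm ⁻¹' ((R⁻¹ * ·) ⁻¹' S)) := by
  have hpre : (fun y : Rd d => R⁻¹ • y) ⁻¹' (norm ⁻¹' S) = norm ⁻¹' ((R⁻¹ * ·) ⁻¹' S) := by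
    ext y
    simp [norm_smul, abs_of_pos hR]
  rw [nuTilde, nuScaled, Measure.smul_apply,
    Measure.map_apply (continuous_const_smul _).measurable (measurable_norm hS), hpre, smul_eq_mul]

theorem ScalingPair.measure_le_mul_setLIntegral (hwl : ScalingPair w l) {μ0 : Measure (Rd d)}
    {R δ : ℝ} (hR : 0 < R) (hδ : 0 < δ) (hμ0 : μ0 ≤ nuTilde w ν R) :
    μ0 (norm ⁻¹' Icc δ 1) ≤
      ENNReal.ofReal (l δ⁻¹) * ∫⁻ y in {y | ‖y‖ ≤ R}, ENNReal.ofReal (w ‖y‖) ∂ν := by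
  have hlδ : 0 ≤ l δ⁻¹ := (hwl.l_pos _ (inv_pos.2 hδ)).le
  have hpt : ∀ y : Rd d, y ∈ norm ⁻¹' Icc (δ * R) R →
      ENNReal.ofReal (w R) ≤ ENNReal.ofReal (l δ⁻¹ * w ‖y‖) := fun y hy =>
    ENNReal.ofReal_le_ofReal <| hwl.apply_le_mul_apply ((mul_pos hδ hR).trans_le hy.1) hR
      (inv_pos.2 hδ) ((le_inv_mul_iff₀ hδ).2 hy.1)
  calc μ0 (norm ⁻¹' Icc δ 1)
      ≤ nuTilde w ν R (norm ⁻¹' Icc δ 1) := hμ0 _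
    _ = ∫⁻ _ in norm ⁻¹' Icc (δ * R) R, ENNReal.ofReal (w R) ∂ν := by
        rw [nuTilde_norm_preimage hR measurableSet_Icc, preimage_const_mul_Icc₀ _ _ (inv_pos.2 hR),
          div_inv_eq_mul, div_inv_eq_mul, one_mul, setLIntegral_const]
    _ ≤ ∫⁻ y in norm ⁻¹' Icc (δ * R) R, ENNReal.ofReal (l δ⁻¹ * w ‖y‖) ∂ν :=
        setLIntegral_mono' (measurable_norm measurableSet_Icc) hpt
    _ = ENNReal.ofReal (l δ⁻¹) * ∫⁻ y in norm ⁻¹' Icc (δ * R) R, ENNReal.ofReal (w ‖y‖) ∂ν := by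
        simp_rw [ENNReal.ofReal_mul hlδ]
        exact lintegral_const_mul' _ _ ENNReal.ofReal_ne_top
    _ ≤ ENNReal.ofReal (l δ⁻¹) * ∫⁻ y in {y | ‖y‖ ≤ R}, ENNReal.ofReal (w ‖y‖) ∂ν := by
        gcongr
        exact fun y hy => hy.2

namespace AssumpA

theorem exists_mul_measure_shell_le (hA : AssumpA w l α ν) {e : ℝ} (he : 0 < e) :
    ∃ C : ℝ, ∀ R > 0, ENNReal.ofReal (w R) * ν (norm ⁻¹' Ioc (e * R) R) ≤ ENNReal.ofReal C := by
  obtain ⟨α₁, α₂, -, hlow, hhigh, hone, N₀, -, hN₀⟩ := hA.scalable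
  have hα₁ : 0 < α₁ := by
    rcases lt_trichotomy α 1 with h | h | h
    · exact (hlow h).1.1
    · exact one_pos.trans (hone h).1.1
    · exact one_pos.trans (hhigh h).1.1
  refine ⟨N₀ / e ^ α₁, fun R hR => ?_⟩
  have hbound : ENNReal.ofReal (e ^ α₁) * nuTilde w ν R (norm ⁻¹' Ioc e 1) ≤ ENNReal.ofReal N₀ :=
    calc ENNReal.ofReal (e ^ α₁) * nuTilde w ν R (norm ⁻¹' Ioc e 1)
        = ∫⁻ _ in norm ⁻¹' Ioc e 1, ENNReal.ofReal (e ^ α₁) ∂(nuTilde w ν R) :=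
          (setLIntegral_const _ _).symm
      _ ≤ ∫⁻ z in norm ⁻¹' Ioc e 1, ENNReal.ofReal (‖z‖ ^ α₁) ∂(nuTilde w ν R) :=
          setLIntegral_mono' (measurable_norm measurableSet_Ioc) fun z hz =>
            ENNReal.ofReal_le_ofReal (Real.rpow_le_rpow he.le hz.1.le hα₁.le)
      _ ≤ ∫⁻ z in {z | ‖z‖ ≤ 1}, ENNReal.ofReal (‖z‖ ^ α₁) ∂(nuTilde w ν R) :=
          lintegral_mono_set fun z hz => hz.2
      _ ≤ ENNReal.ofReal N₀ := le_self_add.trans (hN₀ R hR)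
  rw [nuTilde_norm_preimage hR measurableSet_Ioc, preimage_const_mul_Ioc₀ _ _ (inv_pos.2 hR),
    div_inv_eq_mul, div_inv_eq_mul, one_mul] at hbound
  rw [ENNReal.ofReal_div_of_pos (by positivity), ENNReal.le_div_iff_mul_le
    (Or.inl (ENNReal.ofReal_pos.2 (by positivity)).ne') (Or.inl ENNReal.ofReal_ne_top), mul_comm]
  exact hbound

theorem exists_geometric_shells (hA : AssumpA w l α ν) :
    ∃ e, 0 < e ∧ e < 1 ∧ l e < 1 ∧ ∃ C : ℝ, ∀ k : ℕ,
      ENNReal.ofReal (w (e ^ k)) * ν (norm ⁻¹' Ioc (e ^ (k + 1)) (e ^ k)) ≤ ENNReal.ofReal C := by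
  obtain ⟨e, he0, he1, hle⟩ := hA.scaling.exists_factor_lt_one
  obtain ⟨C, hC⟩ := hA.exists_mul_measure_shell_le he0
  exact ⟨e, he0, he1, hle, C, fun k => by simpa only [pow_succ'] using hC _ (pow_pos he0 k)⟩

theorem setLIntegral_rpow_one_add_lt_top (hA : AssumpA w l α ν) {ε : ℝ} (hε : 0 < ε) :
    ∫⁻ y in {y | ‖y‖ ≤ 1}, ENNReal.ofReal (w ‖y‖ ^ (1 + ε)) ∂ν < ⊤ := by
  have hwl := hA.scaling
  obtain ⟨e, he0, he1, hle, C, hC⟩ := hA.exists_geometric_shells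
  have hwk : ∀ k : ℕ, 0 < w (e ^ k) := fun k => hwl.w_pos _ (pow_pos he0 k)
  refine setLIntegral_norm_le_one_lt_top_of_shells hA.levy.1 he0 he1 (fun k => (hwk k).le)
    ENNReal.ofReal_ne_top (M := l 1 ^ (1 + ε)) (Real.rpow_nonneg (hwl.l_pos e he0).le ε)
    (Real.rpow_lt_one (hwl.l_pos e he0).le hle hε) hC fun k y hy => ENNReal.ofReal_le_ofReal ?_
  have hy0 : 0 < ‖y‖ := (pow_pos he0 _).trans hy.1
  have hl1 : 0 < l 1 := hwl.l_pos 1 one_pos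
  calc w ‖y‖ ^ (1 + ε)
      ≤ (l 1 * w (e ^ k)) ^ (1 + ε) :=
        Real.rpow_le_rpow (hwl.w_pos _ hy0).le
          (hwl.apply_le_mul_apply (pow_pos he0 k) hy0 one_pos (by rw [one_mul]; exact hy.2))
          (by positivity)
    _ = l 1 ^ (1 + ε) * w (e ^ k) ^ ε * w (e ^ k) := by
        rw [Real.mul_rpow hl1.le (hwk k).le, Real.rpow_add (hwk k), Real.rpow_one, mul_assoc,
          mul_comm (w (e ^ k))]
    _ ≤ l 1 ^ (1 + ε) * (l e ^ ε) ^ k * w (e ^ k) := by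
        rw [Real.rpow_pow_comm (hwl.l_pos e he0).le]
        gcongr
        exacts [(hwk k).le, (hwk k).le, hwl.apply_pow_le he0 k]

theorem setLIntegral_rpow_mul_lt_top (hA : AssumpA w l α ν) {ε : ℝ} (hε : 0 < ε) :
    ∫⁻ y in {y | ‖y‖ ≤ 1}, ENNReal.ofReal (‖y‖ ^ ε * w ‖y‖) ∂ν < ⊤ := by
  have hwl := hA.scaling
  obtain ⟨e, he0, he1, -, C, hC⟩ := hA.exists_geometric_shells
  refine setLIntegral_norm_le_one_lt_top_of_shells hA.levy.1 he0 he1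
    (fun k => (hwl.w_pos _ (pow_pos he0 k)).le) ENNReal.ofReal_ne_top (M := l 1) (by positivity)
    (Real.rpow_lt_one he0.le he1 hε) hC fun k y hy => ENNReal.ofReal_le_ofReal ?_
  have hy0 : 0 < ‖y‖ := (pow_pos he0 _).trans hy.1
  calc ‖y‖ ^ ε * w ‖y‖
      ≤ (e ^ k) ^ ε * (l 1 * w (e ^ k)) := by
        gcongr
        · exact (hwl.w_pos _ hy0).le
        · exact hy.2
        · exact hwl.apply_le_mul_apply (pow_pos he0 k) hy0 one_pos (by rw [one_mul]; exact hy.2)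
    _ = l 1 * (e ^ ε) ^ k * w (e ^ k) := by
        rw [Real.rpow_pow_comm he0.le]
        ring

theorem setLIntegral_eq_top (hd : 1 ≤ d) (hA : AssumpA w l α ν) :
    ∫⁻ y in {y | ‖y‖ ≤ 1}, ENNReal.ofReal (w ‖y‖) ∂ν = ⊤ := by
  obtain ⟨μ0, ⟨hμ00, -⟩, -, hμ0, -, c0, hc0, hc0ξ⟩ := hA.nondeg
  have hμ0ball : μ0 {y | ‖y‖ ≤ 1} ≠ 0 := fun h => by
    have := hc0ξ (EuclideanSpace.single ⟨0, hd⟩ 1) (by simp)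
    rw [Measure.restrict_eq_zero.2 h, integral_zero_measure] at this
    exact hc0.not_ge this
  obtain ⟨δ, hδ, hμ0δ⟩ := exists_measure_norm_mem_Icc_ne_zero hμ00 hμ0ball
  by_contra hfin
  have hlim := ENNReal.Tendsto.const_mul (a := ENNReal.ofReal (l δ⁻¹))
    (tendsto_setLIntegral_norm_le_nhdsGT_zero hA.levy.1 hfin) (Or.inr ENNReal.ofReal_ne_top)
  rw [mul_zero] at hlim
  refine hμ0δ (nonpos_iff_eq_zero.1 (ge_of_tendsto hlim ?_))
  filter_upwards [self_mem_nhdsWithin] with R hR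
  exact hA.scaling.measure_le_mul_setLIntegral hR hδ (hμ0 R hR)

end AssumpA

end LevyScaling

/-- Lemma ess (b),(c),(d): integrability properties of `w(|y|)` near the origin. -/
theorem scaling_integrability (d : ℕ) (hd : 1 ≤ d) (w l : ℝ → ℝ) (α : ℝ)
    (ν : Measure (Rd d)) (hA : AssumpA w l α ν) :
    ((∫⁻ y in {y : Rd d | ‖y‖ ≤ 1}, ENNReal.ofReal (w ‖y‖) ∂ν) = ⊤) ∧
    (∀ ε > 0, (∫⁻ y in {y : Rd d | ‖y‖ ≤ 1}, ENNReal.ofReal ((w ‖y‖) ^ (1 + ε)) ∂ν) < ⊤) ∧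
    (∀ ε > 0, (∫⁻ y in {y : Rd d | ‖y‖ ≤ 1}, ENNReal.ofReal (‖y‖ ^ ε * w ‖y‖) ∂ν) < ⊤) :=
  -- the binders `ε > 0` above elaborate with `ε : ℕ`, hence the casts to real exponents
  ⟨hA.setLIntegral_eq_top hd,
    fun n hn => by
      simpa only [← Real.rpow_natCast, Nat.cast_add, Nat.cast_one] using
        hA.setLIntegral_rpow_one_add_lt_top (ε := n) (Nat.cast_pos.2 hn),
    fun n hn => by
      simpa only [← Real.rpow_natCast] using
        hA.setLIntegral_rpow_mul_lt_top (ε := n) (Nat.cast_pos.2 hn)⟩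
end
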